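/- Let α, β, N be real numbers with α ∉ {−1,−2,−3,…} and N not a nonnegative integer, let x be a nonnegative integer, and let t be a real number with |t| < 1. Then the series Σ_{n=0}^{∞} R_n^{α,β,N}(λ^{α,β}(x)) t^n converges, and its sum equals (1−t)^{N−x} · Σ_{k=0}^{x} ((−x)_k (−x−β)_k / ((α+1)_k k!)) t^k, where λ^{α,β}(x) = x(x+α+β+1) and (1−t)^{N−x} denotes the real power of the positive number 1−t. -/

import Mathlib

/-!
Substituting `λ = x(x+α+β+1)` turns the product in `R_n` into `(-1)^j (-x)_j (x+α+β+1)_j`, and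
`(-n)_j / n! = (-1)^j / (n-j)!`, so `R_n(λ(x)) = Σ_j c_j (-1)^j (-N+j)_{n-j} / (n-j)!` with
`c_j = (-x)_j (x+α+β+1)_j / ((α+1)_j j!)`, a sum over `j ≤ x` only. Summing over `n` with the
binomial series `Σ_m (a)_m t^m / m! = (1-t)^{-a}` gives `Σ_j c_j (-t)^j (1-t)^{N-j}`, which is
`(1-t)^{N-x}` times the polynomial `Σ_j c_j (-t)^j (1-t)^{x-j}`. By Pfaff's transformation
(coefficientwise, the Chu–Vandermonde identity) this polynomial is `₂F₁(-x, -x-β; α+1; t)`.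
-/

open Polynomial Finset

noncomputable section

/-- Pochhammer symbol `(a)_k = a(a+1)⋯(a+k−1)`. -/
def poch (a : ℝ) (k : ℕ) : ℝ := ∏ i ∈ Finset.range k, (a + i)

/-- The quadratic lattice `λ^{α,β}(x) = x(x+α+β+1)`. -/
def lam (α β x : ℝ) : ℝ := x * (x + α + β + 1)

/-- The dual Hahn polynomial `R_n^{α,β,N}`. -/
def dualHahn (α β N : ℝ) (n : ℕ) : Polynomial ℝ :=
  Polynomial.C ((n.factorial : ℝ))⁻¹ *
    ∑ j ∈ Finset.range (n + 1),
      Polynomial.C ((-1 : ℝ) ^ j * poch (-(n : ℝ)) j * poch (-N + j) (n - j)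
          / (poch (α + 1) j * (j.factorial : ℝ))) *
        ∏ i ∈ Finset.range j, (Polynomial.X - Polynomial.C ((i : ℝ) * (α + β + 1 + i)))

/-- Dual Hahn polynomial with integer index; `R_k = 0` for `k < 0`. -/
def dualHahnZ (α β N : ℝ) (k : ℤ) : Polynomial ℝ :=
  if 0 ≤ k then dualHahn α β N k.toNat else 0

/-- The Hahn polynomial `h_n^{α,β,N}` evaluated at `x`. -/
def hahn (α β N : ℝ) (n : ℕ) (x : ℝ) : ℝ :=
  ∑ j ∈ Finset.range (n + 1),
    poch (-(n : ℝ)) j * poch ((n : ℝ) + α + β + 1) j * poch (-N + j) (n - j) *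
      poch (α + j + 1) (n - j) * poch (-x) j / (j.factorial : ℝ)

/-- The dual Hahn weight `w_{*;α,β,N}(x)`. -/
def dualHahnWeight (α β : ℝ) (N : ℕ) (x : ℕ) : ℝ :=
  (2 * (x : ℝ) + α + β + 1) * poch (α + 1) x * poch (-(N : ℝ)) x * (N.factorial : ℝ) /
    ((-1 : ℝ) ^ x * poch ((x : ℝ) + α + β + 1) (N + 1) * poch (β + 1) x * (x.factorial : ℝ))

lemma poch_succ (a : ℝ) (k : ℕ) : poch a (k + 1) = poch a k * (a + k) :=
  prod_range_succ _ _

lemma poch_add (a : ℝ) (m n : ℕ) : poch a (m + n) = poch a m * poch (a + m) n := by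
  simp only [poch, prod_range_add, Nat.cast_add, add_assoc]

lemma poch_eq_ascPochhammer_eval (a : ℝ) (k : ℕ) : poch a k = (ascPochhammer ℝ k).eval a := by
  induction k with
  | zero => simp [poch]
  | succ k ih => rw [poch_succ, ih, ascPochhammer_succ_eval]

lemma descPochhammer_smeval_eq_poch (r : ℝ) (k : ℕ) :
    (descPochhammer ℤ k).smeval r = poch (r - k + 1) k := by
  rw [descPochhammer_smeval_eq_ascPochhammer, ascPochhammer_smeval_eq_eval,
    poch_eq_ascPochhammer_eval]

lemma poch_neg_sub_add_one (b : ℝ) (k : ℕ) : poch (-b - k + 1) k = (-1) ^ k * poch b k := by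
  rw [poch_eq_ascPochhammer_eval, poch_eq_ascPochhammer_eval,
    ← descPochhammer_eval_eq_ascPochhammer, ← neg_neg b, ascPochhammer_eval_neg_eq_descPochhammer,
    neg_neg, ← mul_assoc, ← mul_pow]
  simp

lemma poch_neg_natCast (n k : ℕ) : poch (-(n : ℝ)) k = (-1) ^ k * n.descFactorial k := by
  rw [poch_eq_ascPochhammer_eval, ascPochhammer_eval_neg_eq_descPochhammer,
    descPochhammer_eval_eq_descFactorial]

lemma poch_neg_natCast_of_lt {n k : ℕ} (h : n < k) : poch (-(n : ℝ)) k = 0 := by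
  rw [poch_neg_natCast, Nat.descFactorial_eq_zero_iff_lt.mpr h, Nat.cast_zero, mul_zero]

lemma poch_neg_natCast_div_factorial {n k : ℕ} (h : k ≤ n) :
    poch (-(n : ℝ)) k / n.factorial = (-1) ^ k / (n - k).factorial := by
  have hd : (n.descFactorial k : ℝ) ≠ 0 :=
    Nat.cast_ne_zero.mpr fun h0 => (Nat.descFactorial_eq_zero_iff_lt.mp h0).not_ge h
  rw [poch_neg_natCast, ← Nat.factorial_mul_descFactorial h, Nat.cast_mul]
  field_simp

lemma one_sub_pow_eq_sum_poch (n : ℕ) (t : ℝ) :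
    (1 - t) ^ n = ∑ i ∈ range (n + 1), poch (-(n : ℝ)) i / i.factorial * t ^ i := by
  rw [sub_eq_neg_add, add_pow]
  refine sum_congr rfl fun i _ => ?_
  rw [poch_neg_natCast, Nat.descFactorial_eq_factorial_mul_choose, one_pow, neg_pow, Nat.cast_mul]
  field_simp

-- The Chu–Vandermonde identity.
lemma sum_neg_one_pow_mul_choose_mul_poch (b c : ℝ) (k : ℕ) :
    ∑ j ∈ range (k + 1), (-1) ^ j * (k.choose j : ℝ) * poch b j * poch (c + j) (k - j) =
      poch (c - b) k := by
  have h := Ring.descPochhammer_smeval_add (r := -b) (s := c + k - 1) k (Commute.all _ _)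
  rw [Nat.sum_antidiagonal_eq_sum_range_succ (fun i j => (k.choose i : ℝ) *
    ((descPochhammer ℤ i).smeval (-b) * (descPochhammer ℤ j).smeval (c + k - 1)))] at h
  simp only [descPochhammer_smeval_eq_poch, poch_neg_sub_add_one] at h
  rw [show -b + (c + k - 1) - k + 1 = c - b by ring] at h
  rw [h]
  refine sum_congr rfl fun j hj => ?_
  rw [Nat.cast_sub (mem_range_succ_iff.mp hj), show c + k - 1 - (k - j) + 1 = c + j by ring]
  ring

lemma poch_div_factorial_eq_choose (a : ℝ) (n : ℕ) :
    poch a n / n.factorial = Ring.choose (a + n - 1) n := by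
  rw [Ring.choose_eq_smul, descPochhammer_smeval_eq_poch, smul_eq_mul,
    show a + n - 1 - n + 1 = a by ring, div_eq_inv_mul]

lemma hasSum_poch_div_factorial_mul_pow (a t : ℝ) (ht : |t| < 1) :
    HasSum (fun n => poch a n / n.factorial * t ^ n) ((1 - t) ^ (-a)) := by
  have h := (Real.one_div_one_sub_rpow_hasFPowerSeriesOnBall_zero a).hasSum
    (y := t) (by simpa [enorm_eq_nnnorm, ← NNReal.coe_lt_one] using ht)
  simp only [FormalMultilinearSeries.ofScalars_apply_eq, smul_eq_mul, zero_add] at h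
  rw [Real.rpow_neg (by linarith [(abs_lt.mp ht).2]), inv_eq_one_div]
  simpa only [poch_div_factorial_eq_choose] using h

-- The coefficient of `t ^ k` in `₂F₁(a, b; c; t)`.
def hypergeomCoeff (a b c : ℝ) (k : ℕ) : ℝ :=
  poch a k * poch b k / (poch c k * k.factorial)

lemma hypergeomCoeff_neg_natCast_of_lt (b c : ℝ) {n k : ℕ} (h : n < k) :
    hypergeomCoeff (-n) b c k = 0 := by
  rw [hypergeomCoeff, poch_neg_natCast_of_lt h, zero_mul, zero_div]

lemma hypergeomCoeff_mul_poch_div_factorial (m : ℕ) (b c : ℝ) {j k : ℕ} (hjk : j ≤ k)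
    (hc : poch c k ≠ 0) :
    hypergeomCoeff (-m) b c j * (-1) ^ j * (poch (-m + j) (k - j) / (k - j).factorial) =
      poch (-m) k / (k.factorial * poch c k) *
        ((-1) ^ j * (k.choose j : ℝ) * poch b j * poch (c + j) (k - j)) := by
  obtain ⟨i, rfl⟩ := Nat.exists_eq_add_of_le hjk
  rw [poch_add] at hc
  have hcj : poch c j ≠ 0 := left_ne_zero_of_mul hc
  have hcji : poch (c + j) i ≠ 0 := right_ne_zero_of_mul hc
  have hchoose : ((j + i).choose i : ℝ) ≠ 0 := Nat.cast_ne_zero.mpr (Nat.choose_pos (by omega)).ne'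
  rw [poch_add, poch_add, hypergeomCoeff, Nat.add_sub_cancel_left, Nat.choose_symm_add,
    ← Nat.add_choose_mul_factorial_mul_factorial, Nat.cast_mul, Nat.cast_mul]
  field_simp

-- Pfaff's transformation `(1 - t) ^ m ₂F₁(-m, b; c; t / (t - 1)) = ₂F₁(-m, c - b; c; t)`.
theorem sum_hypergeomCoeff_mul_one_sub_pow (m : ℕ) (b c t : ℝ) (hc : ∀ k, poch c k ≠ 0) :
    ∑ j ∈ range (m + 1), hypergeomCoeff (-m) b c j * (-t) ^ j * (1 - t) ^ (m - j) =
      ∑ k ∈ range (m + 1), hypergeomCoeff (-m) (c - b) c k * t ^ k := by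
  have expand : ∀ j ∈ range (m + 1),
      hypergeomCoeff (-m) b c j * (-t) ^ j * (1 - t) ^ (m - j) =
        ∑ i ∈ range (m + 1 - j), hypergeomCoeff (-m) b c j * (-1) ^ j *
          (poch (-m + j) i / i.factorial) * t ^ (j + i) := by
    intro j hj
    have hjm : j ≤ m := mem_range_succ_iff.mp hj
    rw [one_sub_pow_eq_sum_poch, ← Nat.sub_add_comm hjm, mul_sum, Nat.cast_sub hjm]
    refine sum_congr rfl fun i _ => ?_
    rw [neg_pow', pow_add, neg_sub, sub_eq_neg_add]
    ring
  rw [sum_congr rfl expand, ← sum_range_diag_flip]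
  refine sum_congr rfl fun k _ => ?_
  have collect : ∀ j ∈ range (k + 1), hypergeomCoeff (-m) b c j * (-1) ^ j *
        (poch (-m + j) (k - j) / (k - j).factorial) * t ^ (j + (k - j)) =
      poch (-m) k / (k.factorial * poch c k) *
        ((-1) ^ j * (k.choose j : ℝ) * poch b j * poch (c + j) (k - j)) * t ^ k := by
    intro j hj
    have hjk : j ≤ k := mem_range_succ_iff.mp hj
    rw [Nat.add_sub_cancel' hjk, hypergeomCoeff_mul_poch_div_factorial m b c hjk (hc k)]
  rw [sum_congr rfl collect, ← sum_mul, ← mul_sum, sum_neg_one_pow_mul_choose_mul_poch,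
    hypergeomCoeff]
  ring

lemma sum_range_succ_eq_sum_range_succ_ite {M : Type*} [AddCommMonoid M] {m : ℕ} {f : ℕ → M}
    (hf : ∀ j, m < j → f j = 0) (n : ℕ) :
    ∑ j ∈ range (n + 1), f j = ∑ j ∈ range (m + 1), if j ≤ n then f j else 0 := by
  rw [← sum_filter]
  refine (sum_subset (fun j hj => ?_) fun j hj hj' => hf j ?_).symm
  · simp only [mem_filter, mem_range] at hj ⊢
    omega
  · simp only [mem_filter, mem_range, not_and, not_le] at hj hj'
    omega

lemma HasSum.ite_le_sub {M : Type*} [AddCommMonoid M] [TopologicalSpace M] {f : ℕ → M} {a : M}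
    (h : HasSum f a) (j : ℕ) : HasSum (fun n => if j ≤ n then f (n - j) else 0) a := by
  refine ((add_left_injective j).hasSum_iff fun n hn => ?_).mp ?_
  · rw [if_neg]
    intro hjn
    exact hn ⟨n - j, Nat.sub_add_cancel hjn⟩
  · simpa [Function.comp_def] using h

lemma prod_lam_sub (α β y : ℝ) (j : ℕ) :
    ∏ i ∈ range j, (lam α β y - i * (α + β + 1 + i)) =
      (-1) ^ j * poch (-y) j * poch (y + α + β + 1) j := by
  rw [poch, poch, ← card_range j, ← prod_const, card_range, ← prod_mul_distrib,
    ← prod_mul_distrib]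
  refine prod_congr rfl fun i _ => ?_
  rw [lam]
  ring

lemma dualHahn_eval_lam (α β N y : ℝ) (n : ℕ) :
    (dualHahn α β N n).eval (lam α β y) =
      ∑ j ∈ range (n + 1), hypergeomCoeff (-y) (y + α + β + 1) (α + 1) j * (-1) ^ j *
        (poch (-N + j) (n - j) / (n - j).factorial) := by
  rw [dualHahn, eval_mul, eval_C, eval_finsetSum, mul_sum]
  refine sum_congr rfl fun j hj => ?_
  simp only [eval_mul, eval_C, eval_prod, eval_sub, eval_X, prod_lam_sub]
  have hsq : ((-1 : ℝ) ^ j) ^ 2 = 1 := by rw [← pow_mul, mul_comm, pow_mul]; simp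
  set W := poch (-y) j * poch (y + α + β + 1) j * poch (-N + j) (n - j) /
    (poch (α + 1) j * j.factorial)
  rw [hypergeomCoeff]
  linear_combination ((-1 : ℝ) ^ j) ^ 2 * W * poch_neg_natCast_div_factorial
    (mem_range_succ_iff.mp hj) + (-1 : ℝ) ^ j * W / (n - j).factorial * hsq

lemma dualHahn_eval_lam_natCast_mul_pow (α β N t : ℝ) (x n : ℕ) :
    (dualHahn α β N n).eval (lam α β x) * t ^ n =
      ∑ j ∈ range (x + 1), hypergeomCoeff (-x) (x + α + β + 1) (α + 1) j * (-t) ^ j *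
        if j ≤ n then poch (-N + j) (n - j) / (n - j).factorial * t ^ (n - j) else 0 := by
  rw [dualHahn_eval_lam, sum_range_succ_eq_sum_range_succ_ite
    (fun j hj => by rw [hypergeomCoeff_neg_natCast_of_lt _ _ hj]; ring), sum_mul]
  refine sum_congr rfl fun j _ => ?_
  split_ifs with hjn
  · rw [← Nat.add_sub_cancel' hjn, pow_add, Nat.add_sub_cancel_left, neg_pow']
    ring
  · ring

theorem dualHahn_generating_function_general (α β N : ℝ) (hα : ∀ k : ℕ, α ≠ -1 - k)
    (x : ℕ) (t : ℝ) (ht : |t| < 1) :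
    HasSum (fun n : ℕ => (dualHahn α β N n).eval (lam α β x) * t ^ n)
      ((1 - t) ^ (N - (x : ℝ)) *
        ∑ k ∈ Finset.range (x + 1),
          poch (-(x : ℝ)) k * poch (-(x : ℝ) - β) k /
            (poch (α + 1) k * (k.factorial : ℝ)) * t ^ k) := by
  have hc : ∀ k, poch (α + 1) k ≠ 0 := fun k =>
    prod_ne_zero_iff.mpr fun i _ h => hα i (by linarith)
  simp only [dualHahn_eval_lam_natCast_mul_pow]
  set c : ℕ → ℝ := fun j => hypergeomCoeff (-x) (x + α + β + 1) (α + 1) j * (-t) ^ j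
  have hsum := hasSum_sum fun j (_ : j ∈ range (x + 1)) =>
    ((hasSum_poch_div_factorial_mul_pow (-N + j) t ht).ite_le_sub j).mul_left (c j)
  have hpow : ∀ j ∈ range (x + 1), c j * (1 - t) ^ (-(-N + j)) =
      (1 - t) ^ (N - x) * (c j * (1 - t) ^ (x - j)) := by
    intro j hj
    rw [← Real.rpow_natCast, Nat.cast_sub (mem_range_succ_iff.mp hj), mul_left_comm,
      ← Real.rpow_add (by linarith [(abs_lt.mp ht).2])]
    ring_nf
  rw [sum_congr rfl hpow, ← mul_sum, sum_hypergeomCoeff_mul_one_sub_pow x _ _ t hc,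
    show α + 1 - (x + α + β + 1) = -x - β by ring] at hsum
  exact hsum

/-- Generating function for dual Hahn polynomials:
`Σ_{n≥0} R_n^{α,β,N}(λ(x)) tⁿ = (1−t)^{N−x} ₂F₁(−x,−x−β;α+1;t)` for `|t| < 1` and
`x` a nonnegative integer, `N` not a nonnegative integer. -/
theorem dualHahn_generating_function (α β N : ℝ) (hα : ∀ k : ℕ, α ≠ -1 - k)
    (hN : ∀ k : ℕ, N ≠ k) (x : ℕ) (t : ℝ) (ht : |t| < 1) :
    HasSum (fun n : ℕ => (dualHahn α β N n).eval (lam α β x) * t ^ n)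
      ((1 - t) ^ (N - (x : ℝ)) *
        ∑ k ∈ Finset.range (x + 1),
          poch (-(x : ℝ)) k * poch (-(x : ℝ) - β) k /
            (poch (α + 1) k * (k.factorial : ℝ)) * t ^ k) :=
  dualHahn_generating_function_general α β N hα x t ht

end
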